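/- Let 𝕜 be ℝ or ℂ, H an n-dimensional inner product space over 𝕜 with orthonormal basis (h₁,…,h_n), 1 ≤ n₁ < ⋯ < n_q < n, and σ = (σ₁,…,σ_q) a general Schubert symbol of type (n₁,…,n_q,n). Then G_σ(n₁,…,n_q,H) = G(n₁,…,n_q,H) ∩ ∏_{k=1}^q G_{σ_q⋯σ_{k+1}σ_k}(n_k,H); that is, a flag (X¹,…,X^q) has Schubert symbol (σ₁,…,σ_q) if and only if for every k the subspace X^k has Schubert symbol σ_q⋯σ_{k+1}σ_k relative to the complete flag (H_i) on H. -/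

import Mathlib

open scoped InnerProductSpace

noncomputable section

/-- `e` is an open cell in `X` with characteristic map `f : Dⁿ → X`:
`f` is continuous on the closed unit ball, and restricts to a homeomorphism
(i.e. an embedding) of the open unit ball onto `e`. -/
def IsCellMap {X : Type*} [TopologicalSpace X] {n : ℕ}
    (f : EuclideanSpace ℝ (Fin n) → X) (e : Set X) : Prop :=
  ContinuousOn f (Metric.closedBall 0 1) ∧
  Topology.IsEmbedding ((Metric.ball (0 : EuclideanSpace ℝ (Fin n)) 1).restrict f) ∧
  f '' Metric.ball 0 1 = e

/-- `e` is an open cell of dimension `n` in `X`. -/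
def IsOpenCell {X : Type*} [TopologicalSpace X] (e : Set X) (n : ℕ) : Prop :=
  ∃ f : EuclideanSpace ℝ (Fin n) → X, IsCellMap f e

/-- The Stiefel manifold of inner-product-preserving linear maps `𝕜ⁿ → N`,
topologized as a subspace of the normed space of continuous linear maps. -/
abbrev Stiefel (𝕜 : Type*) [RCLike 𝕜] (n : ℕ) (N : Type*) [NormedAddCommGroup N]
    [InnerProductSpace 𝕜 N] : Type _ :=
  { u : EuclideanSpace 𝕜 (Fin n) →L[𝕜] N // ∀ x y, (inner 𝕜 (u x) (u y) : 𝕜) = inner 𝕜 x y }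

variable (𝕜 : Type*) [RCLike 𝕜]

/-- `E_k`: the span of the first `k+1` standard basis vectors (`0`-based index `k`). -/
def Ek (n : ℕ) (k : Fin n) : Submodule 𝕜 (EuclideanSpace 𝕜 (Fin n)) :=
  Submodule.span 𝕜 {x | ∃ i : Fin n, i ≤ k ∧ x = EuclideanSpace.single i (1 : 𝕜)}

/-- The Schubert cell `V_σ(n,N)` in the Stiefel manifold, relative to the orthonormal
basis `b` of `N`. -/
def VCell {n m : ℕ} {N : Type*} [NormedAddCommGroup N] [InnerProductSpace 𝕜 N]
    (b : OrthonormalBasis (Fin m) 𝕜 N) (σ : Fin n → Fin m) : Set (Stiefel 𝕜 n N) :=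
  { u | ∀ k : Fin n,
      (∀ x ∈ Ek 𝕜 n k, u.1 x ∈ Submodule.span 𝕜 (⇑b '' {j : Fin m | j ≤ σ k})) ∧
      ∃ r : ℝ, 0 < r ∧ (inner 𝕜 (u.1 (EuclideanSpace.single k (1 : 𝕜))) (b (σ k)) : 𝕜) = (r : 𝕜) }

/-- The dimension `d(σ) = Σₖ (σ(k) - k)` of an elementary Schubert symbol. -/
def dSigma {n m : ℕ} (σ : Fin n → Fin m) : ℕ := ∑ k : Fin n, ((σ k : ℕ) - (k : ℕ))

/-- The equivalence relation on `V(n,H)` identifying maps with the same image. -/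
def grassmannSetoid (n : ℕ) (H : Type*) [NormedAddCommGroup H] [InnerProductSpace 𝕜 H] :
    Setoid (Stiefel 𝕜 n H) :=
  ⟨fun u v => LinearMap.range (u.1 : EuclideanSpace 𝕜 (Fin n) →L[𝕜] H).toLinearMap =
    LinearMap.range v.1.toLinearMap,
   ⟨fun _ => rfl, Eq.symm, Eq.trans⟩⟩

/-- The Grassmann manifold `G(n,H)` with the quotient topology. -/
abbrev Grassmann (n : ℕ) (H : Type*) [NormedAddCommGroup H] [InnerProductSpace 𝕜 H] : Type _ :=
  Quotient (grassmannSetoid 𝕜 n H)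

/-- A point of `G(n,H)` as an `n`-dimensional subspace of `H`. -/
def Grassmann.rangeOf {n : ℕ} {H : Type*} [NormedAddCommGroup H] [InnerProductSpace 𝕜 H] :
    Grassmann 𝕜 n H → Submodule 𝕜 H :=
  Quotient.lift (fun u => LinearMap.range u.1.toLinearMap) (fun _ _ h => h)

/-- The (1-based) Schubert symbol `σ_X(k) = min { i : dim (X ∩ F i) ≥ k }` of a
subspace `X` relative to a flag `F`. -/
def schubertSigma {K W : Type*} [Ring K] [AddCommGroup W] [Module K W]
    (X : Submodule K W) (F : ℕ → Submodule K W) (k : ℕ) : ℕ :=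
  sInf {i : ℕ | k ≤ Module.finrank K ↥(X ⊓ F i)}

/-- The complete flag associated to an (ordered) orthonormal basis:
`basisFlag b i = span(b₁, …, b_i)` (1-based `i`). -/
def basisFlag {m : ℕ} {N : Type*} [NormedAddCommGroup N] [InnerProductSpace 𝕜 N]
    (b : OrthonormalBasis (Fin m) 𝕜 N) (i : ℕ) : Submodule 𝕜 N :=
  Submodule.span 𝕜 (⇑b '' {j : Fin m | (j : ℕ) < i})

/-- The Schubert cell `G_σ(n,H)` inside the Grassmannian of `n`-dimensional
subspaces of `H`, viewed as a set of submodules. -/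
def GCellSub {n m : ℕ} {H : Type*} [NormedAddCommGroup H] [InnerProductSpace 𝕜 H]
    (b : OrthonormalBasis (Fin m) 𝕜 H) (σ : Fin n → Fin m) : Set (Submodule 𝕜 H) :=
  { X | Module.finrank 𝕜 ↥X = n ∧
        ∀ k : Fin n, schubertSigma X (basisFlag 𝕜 b) ((k : ℕ) + 1) = (σ k : ℕ) + 1 }

/-- The Schubert cell `G_σ(n,H)` as a subset of the Grassmann manifold. -/
def GCell {n m : ℕ} {H : Type*} [NormedAddCommGroup H] [InnerProductSpace 𝕜 H]
    (b : OrthonormalBasis (Fin m) 𝕜 H) (σ : Fin n → Fin m) : Set (Grassmann 𝕜 n H) :=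
  { x | ∀ k : Fin n,
      schubertSigma (Grassmann.rangeOf 𝕜 x) (basisFlag 𝕜 b) ((k : ℕ) + 1) = (σ k : ℕ) + 1 }

/-- Composition of inner-product-preserving maps. -/
def scomp {n q : ℕ} {N : Type*} [NormedAddCommGroup N] [InnerProductSpace 𝕜 N]
    (v : Stiefel 𝕜 q N) (u : Stiefel 𝕜 n (EuclideanSpace 𝕜 (Fin q))) : Stiefel 𝕜 n N :=
  ⟨v.1.comp u.1, fun x y => by
    simp only [ContinuousLinearMap.comp_apply]
    rw [v.2, u.2]⟩

/-- The identity as an inner-product-preserving map. -/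
def sid (n : ℕ) : Stiefel 𝕜 n (EuclideanSpace 𝕜 (Fin n)) :=
  ⟨ContinuousLinearMap.id 𝕜 _, fun _ _ => rfl⟩


section Chains

variable (𝕜 : Type*) [RCLike 𝕜]

/-- Iterated composition `u_{j-1} ∘ ⋯ ∘ u_1 ∘ u_0` of a chain of
inner-product-preserving maps (`0`-based). -/
def chainComp (m : ℕ → ℕ)
    (u : ∀ i : ℕ, Stiefel 𝕜 (m i) (EuclideanSpace 𝕜 (Fin (m (i+1))))) :
    (j : ℕ) → Stiefel 𝕜 (m 0) (EuclideanSpace 𝕜 (Fin (m j)))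
  | 0 => sid 𝕜 (m 0)
  | (j+1) => scomp 𝕜 (u j) (chainComp m u j)

/-- Iterated composition `τ_{j-1} ∘ ⋯ ∘ τ_1 ∘ τ_0` of a chain of Schubert symbols. -/
def symbComp (m : ℕ → ℕ) (τ : ∀ i : ℕ, Fin (m i) → Fin (m (i+1))) :
    (j : ℕ) → Fin (m 0) → Fin (m j)
  | 0 => id
  | (j+1) => τ j ∘ symbComp m τ j

end Chains

section Flags

variable (𝕜 : Type*) [RCLike 𝕜]

/-- The generalized Stiefel manifold `V(n₁,…,n_q,H)` (with `q = Q+1`,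
`nn k = n_{k+1}` 0-based): tuples of isometric embeddings with nested images. -/
abbrev FlagStiefel (nn : ℕ → ℕ) (Q : ℕ) (H : Type*) [NormedAddCommGroup H]
    [InnerProductSpace 𝕜 H] : Type _ :=
  { v : ∀ k : Fin (Q+1), Stiefel 𝕜 (nn k.1) H //
      ∀ k l : Fin (Q+1), k ≤ l → LinearMap.range (v k).1.toLinearMap ≤ LinearMap.range (v l).1.toLinearMap }

/-- A general Schubert symbol of type `(n₁,…,n_q, n)` (with `q = Q+1`,
`nn k = n_{k+1}` 0-based and `nn (Q+1) = n`). -/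
abbrev SymbolFamily (nn : ℕ → ℕ) (Q : ℕ) : Type _ :=
  ∀ k : Fin (Q+1), Fin (nn k.1) → Fin (nn (k.1+1))

/-- The dimension `d(σ) = Σ_k Σ_i (σ_k(i) − i)` of a general Schubert symbol. -/
def dGen {nn : ℕ → ℕ} {Q : ℕ} (σ : SymbolFamily nn Q) : ℕ :=
  ∑ k : Fin (Q+1), ∑ i : Fin (nn k.1), ((σ k i : ℕ) - (i : ℕ))

/-- The cell `V_σ(n₁,…,n_q,H)`: the image under the composition homeomorphism `ψ`
of the product of the cells `V_{σ_k}(n_k, n_{k+1})` and `V_{σ_q}(n_q, H)`. -/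
def GenVCell (nn : ℕ → ℕ) (Q : ℕ) {H : Type*} [NormedAddCommGroup H]
    [InnerProductSpace 𝕜 H] (b : OrthonormalBasis (Fin (nn (Q+1))) 𝕜 H)
    (σ : SymbolFamily nn Q) : Set (FlagStiefel 𝕜 nn Q H) :=
  { v | v.1 (Fin.last Q) ∈ VCell 𝕜 b (σ (Fin.last Q)) ∧
      ∃ u : ∀ k : ℕ, Stiefel 𝕜 (nn k) (EuclideanSpace 𝕜 (Fin (nn (k+1)))),
        (∀ (k : ℕ) (h : k < Q),
            u k ∈ VCell 𝕜 (EuclideanSpace.basisFun (Fin (nn (k+1))) 𝕜)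
              (σ ⟨k, Nat.lt_succ_of_lt h⟩)) ∧
        ∀ (k : ℕ) (h : k < Q),
          v.1 ⟨k, Nat.lt_succ_of_lt h⟩ = scomp 𝕜 (v.1 ⟨k+1, Nat.succ_lt_succ h⟩) (u k) }

/-- The flag manifold `G(n₁,…,n_q,H)` as a subspace of the product of Grassmannians. -/
abbrev FlagManifold (nn : ℕ → ℕ) (Q : ℕ) (H : Type*) [NormedAddCommGroup H]
    [InnerProductSpace 𝕜 H] : Type _ :=
  { x : ∀ k : Fin (Q+1), Grassmann 𝕜 (nn k.1) H //
      ∀ k l : Fin (Q+1), k ≤ l → Grassmann.rangeOf 𝕜 (x k) ≤ Grassmann.rangeOf 𝕜 (x l) }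

/-- The quotient map `p(n₁,…,n_q,H) : V(n₁,…,n_q,H) → G(n₁,…,n_q,H)`. -/
def flagQuot (nn : ℕ → ℕ) (Q : ℕ) {H : Type*} [NormedAddCommGroup H]
    [InnerProductSpace 𝕜 H] (v : FlagStiefel 𝕜 nn Q H) : FlagManifold 𝕜 nn Q H :=
  ⟨fun k => Quotient.mk (grassmannSetoid 𝕜 (nn k.1) H) (v.1 k), fun k l h => v.2 k l h⟩

end Flags

section Induced

variable {K W : Type*} [Ring K] [AddCommGroup W] [Module K W]

/-- Iterated induced flags: `indFlag Q F0 Xn 0 = F0` is the complete flag on the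
ambient space, and `indFlag Q F0 Xn (j+1)` is the complete flag induced on
`Xn (Q-j)` by the flag `indFlag Q F0 Xn j` on the next space. -/
def indFlag (Q : ℕ) (F0 : ℕ → Submodule K W) (Xn : ℕ → Submodule K W) :
    ℕ → ℕ → Submodule K W
  | 0 => F0
  | (j+1) => fun i =>
      Xn (Q - j) ⊓ indFlag Q F0 Xn j (schubertSigma (Xn (Q - j)) (indFlag Q F0 Xn j) i)

/-- The `k`-th component of the Schubert symbol of the flag `Xn`: the Schubert symbol of
`Xn k` inside the completely flagged space `Xn (k+1)` (the ambient space when `k = Q`). -/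
def flagSymbol (Q : ℕ) (F0 : ℕ → Submodule K W) (Xn : ℕ → Submodule K W) (k i : ℕ) : ℕ :=
  schubertSigma (Xn k) (indFlag Q F0 Xn (Q - k)) i

end Induced

section FlagCells

variable (𝕜 : Type*) [RCLike 𝕜]

/-- A tuple of submodules, extended by `⊤` (the ambient space) beyond index `Q`. -/
def tupleExt {Q : ℕ} {H : Type*} [NormedAddCommGroup H] [InnerProductSpace 𝕜 H]
    (Xt : ∀ _ : Fin (Q+1), Submodule 𝕜 H) (j : ℕ) : Submodule 𝕜 H :=
  if h : j < Q + 1 then Xt ⟨j, h⟩ else ⊤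

/-- The set `G(n₁,…,n_q,H)` of flags, as tuples of submodules. -/
def GFlagSet (nn : ℕ → ℕ) (Q : ℕ) (H : Type*) [NormedAddCommGroup H]
    [InnerProductSpace 𝕜 H] : Set (∀ _ : Fin (Q+1), Submodule 𝕜 H) :=
  { Xt | (∀ k : Fin (Q+1), Module.finrank 𝕜 ↥(Xt k) = nn k.1) ∧
      ∀ k l : Fin (Q+1), k ≤ l → Xt k ≤ Xt l }

/-- The Schubert cell `G_σ(n₁,…,n_q,H)`, as a set of tuples of submodules. -/
def GFlagCellSub (nn : ℕ → ℕ) (Q : ℕ) {H : Type*} [NormedAddCommGroup H]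
    [InnerProductSpace 𝕜 H] (b : OrthonormalBasis (Fin (nn (Q+1))) 𝕜 H)
    (σ : SymbolFamily nn Q) : Set (∀ _ : Fin (Q+1), Submodule 𝕜 H) :=
  { Xt | Xt ∈ GFlagSet 𝕜 nn Q H ∧
      ∀ (k : Fin (Q+1)) (i : Fin (nn k.1)),
        flagSymbol Q (basisFlag 𝕜 b) (tupleExt 𝕜 Xt) k.1 (i.1+1) = (σ k i : ℕ) + 1 }

/-- The Schubert cell `G_σ(n₁,…,n_q,H)` as a subset of the flag manifold. -/
def GFlagCellQ (nn : ℕ → ℕ) (Q : ℕ) {H : Type*} [NormedAddCommGroup H]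
    [InnerProductSpace 𝕜 H] (b : OrthonormalBasis (Fin (nn (Q+1))) 𝕜 H)
    (σ : SymbolFamily nn Q) : Set (FlagManifold 𝕜 nn Q H) :=
  { x | ∀ (k : Fin (Q+1)) (i : Fin (nn k.1)),
      flagSymbol Q (basisFlag 𝕜 b)
        (tupleExt 𝕜 (fun l => Grassmann.rangeOf 𝕜 (x.1 l))) k.1 (i.1+1) = (σ k i : ℕ) + 1 }

end FlagCells

/-!
The Schubert symbol of `X` in a flagged space is a Galois-type inverse of `i ↦ dim (X ∩ F i)`.
For `X ≤ Z` the spaces `Z ∩ F t` are exactly the members of the flag induced on `Z`, which gives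
`σ_X^F = σ_Z^F ∘ σ_X^{F|Z}`; the same fact shows that inducing a flag in two steps `H ⊇ Z ⊇ X` is
the same as inducing it directly. Hence the flag on `X^{k+1}` used by the flag symbol is just the
flag induced from `H`, and the absolute symbol of `X^k` is the absolute symbol of `X^{k+1}` composed
with `σ_k`. Unwinding this from `k = q` down gives `σ_q ∘ ⋯ ∘ σ_k`; conversely the relative symbols
are recovered from the absolute ones because the composites `σ_q ∘ ⋯ ∘ σ_{k+1}` are injective.
-/

def inducedFlag {K W : Type*} [Ring K] [AddCommGroup W] [Module K W]
    (Z : Submodule K W) (F : ℕ → Submodule K W) (i : ℕ) : Submodule K W :=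
  Z ⊓ F (schubertSigma Z F i)

section SchubertSigma

open Module

variable {K W : Type*} [DivisionRing K] [AddCommGroup W] [Module K W]
  {X Z : Submodule K W} {F : ℕ → Submodule K W} {d i k : ℕ}

theorem schubertSigma_le (h : k ≤ finrank K ↥(X ⊓ F i)) : schubertSigma X F k ≤ i :=
  Nat.sInf_le h

theorem le_finrank_inf_schubertSigma (h : k ≤ finrank K ↥(X ⊓ F i)) :
    k ≤ finrank K ↥(X ⊓ F (schubertSigma X F k)) :=
  Nat.sInf_mem (⟨i, h⟩ : {j : ℕ | k ≤ finrank K ↥(X ⊓ F j)}.Nonempty)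

theorem schubertSigma_zero : schubertSigma X F 0 = 0 :=
  Nat.sInf_eq_zero.mpr (Or.inl (Nat.zero_le _))

theorem inf_inducedFlag_of_le (hXZ : X ≤ Z) (i : ℕ) :
    X ⊓ inducedFlag Z F i = X ⊓ F (schubertSigma Z F i) := by
  rw [inducedFlag, ← inf_assoc, inf_eq_left.mpr hXZ]

variable [FiniteDimensional K W]

theorem schubertSigma_of_finrank_lt (h : finrank K X < k) : schubertSigma X F k = 0 :=
  Nat.sInf_eq_zero.mpr <| Or.inr <| Set.eq_empty_of_forall_notMem fun _ hi =>
    absurd (hi.trans (Submodule.finrank_mono inf_le_left)) h.not_ge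

theorem pos_and_le_finrank_of_schubertSigma_ne_zero (h : schubertSigma X F k ≠ 0) :
    0 < k ∧ k ≤ finrank K X := by
  refine ⟨Nat.pos_of_ne_zero fun hk => h (by rw [hk, schubertSigma_zero]), ?_⟩
  by_contra! hk
  exact h (schubertSigma_of_finrank_lt hk)

theorem inducedFlag_finrank_inf (hF : Monotone F) (t : ℕ) :
    inducedFlag Z F (finrank K ↥(Z ⊓ F t)) = Z ⊓ F t :=
  Submodule.eq_of_le_of_finrank_le (inf_le_inf_left Z (hF (schubertSigma_le le_rfl)))
    (le_finrank_inf_schubertSigma le_rfl)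

theorem inducedFlag_finrank (hF : Monotone F) (hZ : Z ≤ F d) :
    inducedFlag Z F (finrank K Z) = Z := by
  have h := inducedFlag_finrank_inf (Z := Z) hF d
  rwa [inf_eq_left.mpr hZ] at h

theorem schubertSigma_eq_comp_inducedFlag (hF : Monotone F) (hXZ : X ≤ Z) (hZ : Z ≤ F d)
    (hk : k ≤ finrank K X) :
    schubertSigma X F k = schubertSigma Z F (schubertSigma X (inducedFlag Z F) k) := by
  have hXd : k ≤ finrank K ↥(X ⊓ F d) := by rwa [inf_eq_left.mpr (hXZ.trans hZ)]
  set t := schubertSigma X F k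
  set r := schubertSigma X (inducedFlag Z F) k
  have hr : k ≤ finrank K ↥(X ⊓ F (schubertSigma Z F r)) := by
    rw [← inf_inducedFlag_of_le hXZ]
    refine le_finrank_inf_schubertSigma (i := finrank K Z) ?_
    rwa [inducedFlag_finrank hF hZ, inf_eq_left.mpr hXZ]
  have hrt : r ≤ finrank K ↥(Z ⊓ F t) := by
    refine schubertSigma_le ?_
    rw [inducedFlag_finrank_inf hF, ← inf_assoc, inf_eq_left.mpr hXZ]
    exact le_finrank_inf_schubertSigma hXd
  exact le_antisymm (schubertSigma_le hr) (schubertSigma_le hrt)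

theorem inducedFlag_inducedFlag (hF : Monotone F) (hXZ : X ≤ Z) (hZ : Z ≤ F d) :
    inducedFlag X (inducedFlag Z F) = inducedFlag X F := by
  funext i
  rw [inducedFlag, inf_inducedFlag_of_le hXZ, inducedFlag]
  rcases le_or_gt i (finrank K X) with hi | hi
  · rw [← schubertSigma_eq_comp_inducedFlag hF hXZ hZ hi]
  · rw [schubertSigma_of_finrank_lt hi, schubertSigma_of_finrank_lt hi, schubertSigma_zero]

end SchubertSigma

section FlagSymbol

open Module

variable {K W : Type*} [DivisionRing K] [AddCommGroup W] [Module K W]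
  {F Xn : ℕ → Submodule K W} {Q d : ℕ}

theorem flagSymbol_self : flagSymbol Q F Xn Q = schubertSigma (Xn Q) F := by
  change schubertSigma (Xn Q) (indFlag Q F Xn (Q - Q)) = _
  rw [Nat.sub_self]
  rfl

variable [FiniteDimensional K W]

theorem indFlag_succ (hF : Monotone F) (hXn : Monotone Xn) (hQ : Xn Q ≤ F d) (j : ℕ) :
    indFlag Q F Xn (j + 1) = inducedFlag (Xn (Q - j)) F := by
  induction j with
  | zero => rfl
  | succ j ih =>
    change inducedFlag (Xn (Q - (j + 1))) (indFlag Q F Xn (j + 1)) = _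
    rw [ih, inducedFlag_inducedFlag hF (hXn (by omega)) ((hXn (Nat.sub_le Q j)).trans hQ)]

theorem flagSymbol_of_lt (hF : Monotone F) (hXn : Monotone Xn) (hQ : Xn Q ≤ F d) {k : ℕ}
    (hk : k < Q) : flagSymbol Q F Xn k = schubertSigma (Xn k) (inducedFlag (Xn (k + 1)) F) := by
  change schubertSigma (Xn k) (indFlag Q F Xn (Q - k)) = _
  rw [show Q - k = Q - k - 1 + 1 by omega, indFlag_succ hF hXn hQ,
    show Q - (Q - k - 1) = k + 1 by omega]

theorem schubertSigma_eq_comp_flagSymbol (hF : Monotone F) (hXn : Monotone Xn)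
    (hQ : Xn Q ≤ F d) {k i : ℕ} (hk : k < Q) (hi : i ≤ finrank K (Xn k)) :
    schubertSigma (Xn k) F i = schubertSigma (Xn (k + 1)) F (flagSymbol Q F Xn k i) := by
  rw [flagSymbol_of_lt hF hXn hQ hk]
  exact schubertSigma_eq_comp_inducedFlag hF (hXn k.le_succ) ((hXn hk).trans hQ) hi

end FlagSymbol

section BasisFlag

variable {𝕜 : Type*} [RCLike 𝕜] {N : Type*} [NormedAddCommGroup N] [InnerProductSpace 𝕜 N]
  {m : ℕ} (b : OrthonormalBasis (Fin m) 𝕜 N)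

theorem basisFlag_mono : Monotone (basisFlag 𝕜 b) :=
  fun _ _ hij => Submodule.span_mono (Set.image_mono fun _ hj => lt_of_lt_of_le hj hij)

theorem basisFlag_self : basisFlag 𝕜 b m = ⊤ := by
  rw [basisFlag, show {j : Fin m | (j : ℕ) < m} = Set.univ from Set.eq_univ_of_forall Fin.is_lt,
    Set.image_univ, ← OrthonormalBasis.coe_toBasis, b.toBasis.span_eq]

end BasisFlag

section TupleExt

variable {𝕜 : Type*} [RCLike 𝕜] {H : Type*} [NormedAddCommGroup H] [InnerProductSpace 𝕜 H]
  {Q : ℕ} {Xt : ∀ _ : Fin (Q + 1), Submodule 𝕜 H}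

theorem tupleExt_val (k : Fin (Q + 1)) : tupleExt 𝕜 Xt k = Xt k :=
  dif_pos k.2

theorem tupleExt_mono (hXt : ∀ k l : Fin (Q + 1), k ≤ l → Xt k ≤ Xt l) :
    Monotone (tupleExt 𝕜 Xt) := by
  intro j l hjl
  by_cases hl : l < Q + 1
  · rw [tupleExt, dif_pos (hjl.trans_lt hl), tupleExt, dif_pos hl]
    exact hXt _ _ hjl
  · rw [show tupleExt 𝕜 Xt l = ⊤ from dif_neg hl]
    exact le_top

end TupleExt

section Symbols

variable {nn : ℕ → ℕ} {Q : ℕ} {σ : SymbolFamily nn Q}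
  {c : ∀ k : Fin (Q + 1), Fin (nn k) → Fin (nn (Q + 1))}

theorem injective_of_eq_comp (hσ : ∀ k, Function.Injective (σ k))
    (hclast : c (Fin.last Q) = σ (Fin.last Q))
    (hcstep : ∀ k : Fin Q, c k.castSucc = c k.succ ∘ σ k.castSucc) (k : Fin (Q + 1)) :
    Function.Injective (c k) := by
  induction k using Fin.reverseInduction with
  | last => rw [hclast]; exact hσ _
  | cast k ih => rw [hcstep k]; exact ih.comp (hσ _)

/-- `s k` and `A k` stand for the Schubert symbols of the `k`-th space of a flag relative to the next
space and to the ambient space. -/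
theorem forall_relative_iff_forall_absolute (hσ : ∀ k, Function.Injective (σ k))
    (hclast : c (Fin.last Q) = σ (Fin.last Q))
    (hcstep : ∀ k : Fin Q, c k.castSucc = c k.succ ∘ σ k.castSucc)
    (s A : Fin (Q + 1) → ℕ → ℕ) (hlast : s (Fin.last Q) = A (Fin.last Q))
    (hstep : ∀ (k : Fin Q) (i : ℕ), i ≤ nn k → A k.castSucc i = A k.succ (s k.castSucc i))
    (hA : ∀ (k : Fin (Q + 1)) m, A k m ≠ 0 → 0 < m ∧ m ≤ nn k) :
    (∀ (k : Fin (Q + 1)) (i : Fin (nn k)), s k (i + 1) = σ k i + 1) ↔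
      ∀ (k : Fin (Q + 1)) (i : Fin (nn k)), A k (i + 1) = c k i + 1 := by
  constructor
  · intro hs k
    induction k using Fin.reverseInduction with
    | last => intro i; rw [← hlast, hs, hclast]
    | cast k ih =>
      intro i
      rw [hstep k _ i.2, hs, hcstep k]
      exact ih (σ k.castSucc i)
  · intro hAc k i
    induction k using Fin.lastCases with
    | last => rw [hlast, hAc, hclast]
    | cast k =>
      have hcomp : c k.castSucc i + 1 = A k.succ (s k.castSucc (i + 1)) := by
        rw [← hAc]; exact hstep k _ i.2
      obtain ⟨hpos, hle⟩ := hA k.succ _ (by rw [← hcomp]; exact Nat.succ_ne_zero _)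
      obtain ⟨m, hm⟩ := Nat.exists_eq_add_one_of_ne_zero hpos.ne'
      rw [hm, hAc k.succ ⟨m, by omega⟩, hcstep k] at hcomp
      have hσm := injective_of_eq_comp hσ hclast hcstep _ (Fin.ext (Nat.succ_injective hcomp))
      rw [hm, hσm]

end Symbols

theorem gFlagCell_eq_inter_composite_cells_general
    (𝕜 : Type*) [RCLike 𝕜] (H : Type*) [NormedAddCommGroup H] [InnerProductSpace 𝕜 H]
    (nn : ℕ → ℕ) (Q : ℕ)
    (b : OrthonormalBasis (Fin (nn (Q + 1))) 𝕜 H)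
    (σ : SymbolFamily nn Q) (hσ : ∀ k, StrictMono (σ k))
    (c : ∀ k : Fin (Q + 1), Fin (nn k.1) → Fin (nn (Q + 1)))
    (hclast : c (Fin.last Q) = σ (Fin.last Q))
    (hcstep : ∀ (k : ℕ) (h : k < Q),
      c ⟨k, Nat.lt_succ_of_lt h⟩ =
        c ⟨k + 1, Nat.succ_lt_succ h⟩ ∘ σ ⟨k, Nat.lt_succ_of_lt h⟩) :
    GFlagCellSub 𝕜 nn Q b σ =
      GFlagSet 𝕜 nn Q H ∩
        { Xt : ∀ _ : Fin (Q + 1), Submodule 𝕜 H |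
          ∀ (k : Fin (Q + 1)) (i : Fin (nn k.1)),
            schubertSigma (Xt k) (basisFlag 𝕜 b) (i.1 + 1) = (c k i : ℕ) + 1 } := by
  have : FiniteDimensional 𝕜 H := b.toBasis.finiteDimensional_of_finite
  ext Xt
  refine and_congr_right fun hXt => ?_
  have hXn := tupleExt_mono hXt.2
  have htop : tupleExt 𝕜 Xt Q ≤ basisFlag 𝕜 b (nn (Q + 1)) := by
    rw [basisFlag_self]
    exact le_top
  refine forall_relative_iff_forall_absolute (fun k => (hσ k).injective) hclast
    (fun k => hcstep k k.2) (fun k => flagSymbol Q (basisFlag 𝕜 b) (tupleExt 𝕜 Xt) k)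
    (fun k => schubertSigma (Xt k) (basisFlag 𝕜 b)) ?_ ?_ ?_
  · exact flagSymbol_self.trans (congrArg (schubertSigma · _) (tupleExt_val (Fin.last Q)))
  · intro k i hi
    have hk : tupleExt 𝕜 Xt k = Xt k.castSucc := tupleExt_val k.castSucc
    have hk' : tupleExt 𝕜 Xt (k + 1) = Xt k.succ := tupleExt_val k.succ
    have hcomp := schubertSigma_eq_comp_flagSymbol (basisFlag_mono b) hXn htop k.2
      (i := i) (by rwa [hk, hXt.1])
    rwa [hk, hk'] at hcomp
  · intro k m hm
    exact hXt.1 k ▸ pos_and_le_finrank_of_schubertSigma_ne_zero hm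

/-- Lemma 6.3: a flag `(X¹,…,X^q)` has Schubert symbol `σ = (σ₁,…,σ_q)` (each `σ_k`
computed in the completely flagged space `X^{k+1}`) if and only if each `X^k` has
Schubert symbol `c_k = σ_q⋯σ_{k+1}σ_k` relative to the complete flag of `H`; i.e.
`G_σ(n₁,…,n_q,H) = G(n₁,…,n_q,H) ∩ ∏_k G_{c_k}(n_k,H)`. -/
theorem gFlagCell_eq_inter_composite_cells
    (𝕜 : Type*) [RCLike 𝕜] (H : Type*) [NormedAddCommGroup H] [InnerProductSpace 𝕜 H]
    [FiniteDimensional 𝕜 H] (nn : ℕ → ℕ) (Q : ℕ)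
    (h0 : 0 < nn 0) (hchain : ∀ k ≤ Q, nn k < nn (k + 1))
    (b : OrthonormalBasis (Fin (nn (Q + 1))) 𝕜 H)
    (σ : SymbolFamily nn Q) (hσ : ∀ k, StrictMono (σ k))
    (c : ∀ k : Fin (Q + 1), Fin (nn k.1) → Fin (nn (Q + 1)))
    (hclast : c (Fin.last Q) = σ (Fin.last Q))
    (hcstep : ∀ (k : ℕ) (h : k < Q),
      c ⟨k, Nat.lt_succ_of_lt h⟩ =
        c ⟨k + 1, Nat.succ_lt_succ h⟩ ∘ σ ⟨k, Nat.lt_succ_of_lt h⟩) :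
    GFlagCellSub 𝕜 nn Q b σ =
      GFlagSet 𝕜 nn Q H ∩
        { Xt : ∀ _ : Fin (Q + 1), Submodule 𝕜 H |
          ∀ (k : Fin (Q + 1)) (i : Fin (nn k.1)),
            schubertSigma (Xt k) (basisFlag 𝕜 b) (i.1 + 1) = (c k i : ℕ) + 1 } :=
  gFlagCell_eq_inter_composite_cells_general 𝕜 H nn Q b σ hσ c hclast hcstep
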